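/- Monotonicity of the discrete backward map: for all ψ̂₁, ψ̂₂ ∈ M_0 with ψ̂₁_{i,j} ≤ ψ̂₂_{i,j} for all i,j, one has Φ̂(ψ̂₁)_{i,j} ≥ Φ̂(ψ̂₂)_{i,j} for all i,j. -/

import Mathlib

/-!
Backward induction in time. On each time row the difference `φ₂ - φ₁` satisfies the linearised
scheme with a reaction term that, by monotonicity of `f` and `f ≤ 0`, is nonnegative wherever the
difference is positive (this needs `φ₁ ≥ 0`, proved first by the same argument applied to `-φ₁`).
At a positive maximum of the difference the clamped second difference is `≤ 0` and the time
difference is `< 0`, a contradiction: this is the one-step discrete maximum principle.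
-/

noncomputable section

open Real Filter

/-- Sup of `|g|` over `[0,1]` (the sup norm `‖g‖_∞`). -/
def supIcc (g : ℝ → ℝ) : ℝ := ⨆ x : Set.Icc (0:ℝ) 1, |g (x : ℝ)|

/-- Sup of `|f|` over `[0,1] × ℝ` (the sup norm `‖f‖_∞`). -/
def supF (f : ℝ → ℝ → ℝ) : ℝ := ⨆ p : Set.Icc (0:ℝ) 1 × ℝ, |f (p.1 : ℝ) p.2|

/-- Membership in `M_ε`: all grid entries (for `i ≤ I`, `j ≤ J`) are at least `ε`. -/
def MemM (I J : ℕ) (ε : ℝ) (m : ℕ → ℕ → ℝ) : Prop :=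
  ∀ i ≤ I, ∀ j ≤ J, ε ≤ m i j

/-- The discrete backward scheme `(Ê_φ)` with data `ψ`.  Here `Δt = T/I`, `Δx = 1/J`,
`x_j = j/J`, and the Neumann conventions `m_{i,-1} = m_{i,0}`, `m_{i,J+1} = m_{i,J}`
are realized by the clamped indices `j - 1` (truncated `ℕ`-subtraction) and `min (j+1) J`. -/
def BScheme (T σ : ℝ) (I J : ℕ) (f : ℝ → ℝ → ℝ) (uT : ℝ → ℝ)
    (ψ φ : ℕ → ℕ → ℝ) : Prop :=
  (∀ i < I, ∀ j ≤ J,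
      (φ (i+1) j - φ i j) / (T / (I:ℝ))
        + σ^2 / 2 * ((φ i (min (j+1) J) - 2 * φ i j + φ i (j-1)) / (1/(J:ℝ))^2)
      = -(1/σ^2) * f ((j:ℝ)/(J:ℝ)) (φ i j * ψ i j) * φ i j)
  ∧ ∀ j ≤ J, φ I j = Real.exp (uT ((j:ℝ)/(J:ℝ)) / σ^2)

/-- The discrete forward scheme `(Ê_ψ)` with data `φ` (same conventions as `BScheme`). -/
def FScheme (T σ : ℝ) (I J : ℕ) (f : ℝ → ℝ → ℝ) (m0 : ℝ → ℝ)
    (φ ψ : ℕ → ℕ → ℝ) : Prop :=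
  (∀ i < I, ∀ j ≤ J,
      (ψ (i+1) j - ψ i j) / (T / (I:ℝ))
        - σ^2 / 2 * ((ψ (i+1) (min (j+1) J) - 2 * ψ (i+1) j + ψ (i+1) (j-1)) / (1/(J:ℝ))^2)
      = (1/σ^2) * f ((j:ℝ)/(J:ℝ)) (φ (i+1) j * ψ (i+1) j) * ψ (i+1) j)
  ∧ ∀ j ≤ J, ψ 0 j = m0 ((j:ℝ)/(J:ℝ)) / φ 0 j

/-- Squared grid norm `‖m‖² = max_{0 ≤ i ≤ I} (1/(J+1)) Σ_{j=0}^{J} m_{i,j}²`. -/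
def gnormSq (I J : ℕ) (m : ℕ → ℕ → ℝ) : ℝ :=
  (Finset.range (I+1)).sup' (Finset.nonempty_range_iff.mpr (Nat.succ_ne_zero I))
    (fun i => (1/((J:ℝ)+1)) * ∑ j ∈ Finset.range (J+1), (m i j)^2)

/-- Grid norm `‖m‖`. -/
def gnorm (I J : ℕ) (m : ℕ → ℕ → ℝ) : ℝ := Real.sqrt (gnormSq I J m)

theorem natCast_div_mem_Icc {j J : ℕ} (hj : j ≤ J) : (j : ℝ) / J ∈ Set.Icc (0 : ℝ) 1 :=
  ⟨by positivity, div_le_one_of_le₀ (by exact_mod_cast hj) (Nat.cast_nonneg J)⟩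

/-- Left-hand side of the backward scheme at node `j`, with `u` the row at time `i` and `v` the
row at time `i + 1`; `BScheme` uses `dt = T / I`, `c = σ² / 2` and `h2 = (1 / J)²`. -/
def discreteBackwardOp (dt c h2 : ℝ) (J : ℕ) (u v : ℕ → ℝ) (j : ℕ) : ℝ :=
  (v j - u j) / dt + c * ((u (min (j + 1) J) - 2 * u j + u (j - 1)) / h2)

section discreteBackwardOp

variable {dt c h2 : ℝ} {J : ℕ}

theorem discreteBackwardOp_sub (u₁ u₂ v₁ v₂ : ℕ → ℝ) (j : ℕ) :
    discreteBackwardOp dt c h2 J (fun k => u₂ k - u₁ k) (fun k => v₂ k - v₁ k) j =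
      discreteBackwardOp dt c h2 J u₂ v₂ j - discreteBackwardOp dt c h2 J u₁ v₁ j := by
  unfold discreteBackwardOp
  ring

theorem discreteBackwardOp_neg (u v : ℕ → ℝ) (j : ℕ) :
    discreteBackwardOp dt c h2 J (fun k => -u k) (fun k => -v k) j =
      -discreteBackwardOp dt c h2 J u v j := by
  unfold discreteBackwardOp
  ring

theorem nonpos_of_discreteBackwardOp_nonneg {u v : ℕ → ℝ} (hdt : 0 < dt) (hc : 0 ≤ c)
    (hh2 : 0 ≤ h2) (hv : ∀ j ≤ J, v j ≤ 0)
    (hop : ∀ j ≤ J, 0 < u j → 0 ≤ discreteBackwardOp dt c h2 J u v j) :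
    ∀ j ≤ J, u j ≤ 0 := by
  obtain ⟨j₀, hj₀, hmax⟩ := (Finset.range (J + 1)).exists_max_image u ⟨0, by simp⟩
  replace hmax : ∀ j ≤ J, u j ≤ u j₀ := fun j hj => hmax j (by simp only [Finset.mem_range]; omega)
  rw [Finset.mem_range, Nat.lt_succ_iff] at hj₀
  intro j hj
  refine (hmax j hj).trans (not_lt.1 fun hpos => ?_)
  have htime : (v j₀ - u j₀) / dt < 0 := div_neg_of_neg_of_pos (by linarith [hv j₀ hj₀]) hdt
  have hright := hmax (min (j₀ + 1) J) (min_le_right _ _)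
  have hleft := hmax (j₀ - 1) (by omega)
  have hspace : c * ((u (min (j₀ + 1) J) - 2 * u j₀ + u (j₀ - 1)) / h2) ≤ 0 :=
    mul_nonpos_of_nonneg_of_nonpos hc (div_nonpos_of_nonpos_of_nonneg (by linarith) hh2)
  have := hop j₀ hj₀ hpos
  unfold discreteBackwardOp at this
  linarith

end discreteBackwardOp

theorem apply_mul_mul_le_of_antitone {g : ℝ → ℝ} (hg : Antitone g) (hg0 : ∀ ξ, g ξ ≤ 0)
    {a₁ a₂ b₁ b₂ : ℝ} (ha₁ : 0 ≤ a₁) (ha : a₁ ≤ a₂) (hb₁ : 0 ≤ b₁) (hb : b₁ ≤ b₂) :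
    g (a₂ * b₂) * a₂ ≤ g (a₁ * b₁) * a₁ :=
  calc g (a₂ * b₂) * a₂ ≤ g (a₂ * b₂) * a₁ := mul_le_mul_of_nonpos_left ha (hg0 _)
    _ ≤ g (a₁ * b₁) * a₁ :=
      mul_le_mul_of_nonneg_right (hg (mul_le_mul ha hb hb₁ (ha₁.trans ha))) ha₁

namespace BScheme

variable {T σ : ℝ} {I J : ℕ} {f : ℝ → ℝ → ℝ} {uT : ℝ → ℝ} {ψ φ : ℕ → ℕ → ℝ}

theorem discreteBackwardOp_eq (hφ : BScheme T σ I J f uT ψ φ) {i j : ℕ} (hi : i < I)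
    (hj : j ≤ J) :
    discreteBackwardOp (T / I) (σ ^ 2 / 2) ((1 / J) ^ 2) J (φ i) (φ (i + 1)) j =
      -(1 / σ ^ 2) * f (j / J) (φ i j * ψ i j) * φ i j :=
  hφ.1 i hi j hj

theorem nonneg (hT : 0 < T) (hfneg : ∀ x ∈ Set.Icc (0:ℝ) 1, ∀ ξ : ℝ, f x ξ ≤ 0)
    (hφ : BScheme T σ I J f uT ψ φ) : ∀ i ≤ I, ∀ j ≤ J, 0 ≤ φ i j := by
  intro i hi
  induction hi using Nat.decreasingInduction with
  | self => exact fun j hj => (hφ.2 j hj).symm ▸ (Real.exp_pos _).le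
  | of_succ i hi ih =>
    have hdt : 0 < T / I := div_pos hT (by exact_mod_cast Nat.zero_lt_of_lt hi)
    refine fun j hj => neg_nonpos.1 <| nonpos_of_discreteBackwardOp_nonneg
      (u := fun k => -φ i k) (v := fun k => -φ (i + 1) k) (c := σ ^ 2 / 2) (h2 := (1 / J) ^ 2)
      hdt (by positivity) (by positivity) (fun j hj => neg_nonpos.2 (ih j hj))
      (fun j hj hneg => ?_) j hj
    rw [discreteBackwardOp_neg, hφ.discreteBackwardOp_eq hi hj, neg_mul, neg_mul, neg_neg,
      mul_assoc]
    exact mul_nonneg (by positivity) <|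
      mul_nonneg_of_nonpos_of_nonpos (hfneg _ (natCast_div_mem_Icc hj) _) (neg_pos.1 hneg).le

end BScheme

theorem stmt_4_general (T σ : ℝ) (hT : 0 < T)
    (I J : ℕ)
    (f : ℝ → ℝ → ℝ) (uT : ℝ → ℝ)
    (hfneg : ∀ x ∈ Set.Icc (0:ℝ) 1, ∀ ξ : ℝ, f x ξ ≤ 0)
    (hfmono : ∀ x ∈ Set.Icc (0:ℝ) 1, Antitone (f x))
    (ψ₁ ψ₂ : ℕ → ℕ → ℝ) (hψ₁ : MemM I J 0 ψ₁)
    (hle : ∀ i ≤ I, ∀ j ≤ J, ψ₁ i j ≤ ψ₂ i j)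
    (φ₁ φ₂ : ℕ → ℕ → ℝ)
    (hφ₁ : BScheme T σ I J f uT ψ₁ φ₁) (hφ₂ : BScheme T σ I J f uT ψ₂ φ₂) :
    ∀ i ≤ I, ∀ j ≤ J, φ₂ i j ≤ φ₁ i j := by
  have hφ₁_nonneg := hφ₁.nonneg hT hfneg
  intro i hi
  induction hi using Nat.decreasingInduction with
  | self => exact fun j hj => (hφ₁.2 j hj ▸ hφ₂.2 j hj).le
  | of_succ i hi ih =>
    have hdt : 0 < T / I := div_pos hT (by exact_mod_cast Nat.zero_lt_of_lt hi)
    refine fun j hj => sub_nonpos.1 <| nonpos_of_discreteBackwardOp_nonneg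
      (u := fun k => φ₂ i k - φ₁ i k) (v := fun k => φ₂ (i + 1) k - φ₁ (i + 1) k)
      (c := σ ^ 2 / 2) (h2 := (1 / J) ^ 2) hdt (by positivity) (by positivity)
      (fun j hj => sub_nonpos.2 (ih j hj)) (fun j hj hpos => ?_) j hj
    have hx := natCast_div_mem_Icc hj
    have hreaction := apply_mul_mul_le_of_antitone (hfmono _ hx) (hfneg _ hx)
      (hφ₁_nonneg i hi.le j hj) (sub_pos.1 hpos).le (hψ₁ i hi.le j hj) (hle i hi.le j hj)
    rw [discreteBackwardOp_sub, hφ₂.discreteBackwardOp_eq hi hj, hφ₁.discreteBackwardOp_eq hi hj,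
      sub_nonneg, neg_mul, neg_mul, neg_mul, neg_mul, neg_le_neg_iff, mul_assoc, mul_assoc]
    exact mul_le_mul_of_nonneg_left hreaction (by positivity)

theorem stmt_4 (T σ : ℝ) (hT : 0 < T) (hσ : 0 < σ)
    (I J : ℕ) (hI : 1 ≤ I) (hJ : 1 ≤ J)
    (f : ℝ → ℝ → ℝ) (uT : ℝ → ℝ)
    (hfc : ∀ x ∈ Set.Icc (0:ℝ) 1, Continuous (f x))
    (hfb : ∃ B : ℝ, ∀ x ∈ Set.Icc (0:ℝ) 1, ∀ ξ : ℝ, |f x ξ| ≤ B)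
    (hfneg : ∀ x ∈ Set.Icc (0:ℝ) 1, ∀ ξ : ℝ, f x ξ ≤ 0)
    (hfmono : ∀ x ∈ Set.Icc (0:ℝ) 1, Antitone (f x))
    (huTb : ∃ B : ℝ, ∀ x ∈ Set.Icc (0:ℝ) 1, |uT x| ≤ B)
    (ψ₁ ψ₂ : ℕ → ℕ → ℝ) (hψ₁ : MemM I J 0 ψ₁) (hψ₂ : MemM I J 0 ψ₂)
    (hle : ∀ i ≤ I, ∀ j ≤ J, ψ₁ i j ≤ ψ₂ i j)
    (φ₁ φ₂ : ℕ → ℕ → ℝ)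
    (hφ₁ : BScheme T σ I J f uT ψ₁ φ₁) (hφ₂ : BScheme T σ I J f uT ψ₂ φ₂) :
    ∀ i ≤ I, ∀ j ≤ J, φ₂ i j ≤ φ₁ i j :=
  stmt_4_general T σ hT I J f uT hfneg hfmono ψ₁ ψ₂ hψ₁ hle φ₁ φ₂ hφ₁ hφ₂
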